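/- arXiv:1811.00437 — 3 statements merged into one kernel-verified Lean document; each statement's English description precedes it below -/
import Mathlib

section
/- Let F be twice continuously differentiable on (−1,1), let κ ≥ 0 and C₀ > 0, and assume F″(s) + a(x) ≥ C₀ for all s ∈ (−1,1) and a.e. x ∈ Ω. Set G′(s) := F′(s) + κs. Then for all φ, ψ ∈ L²(Ω) with φ(x) ∈ (−1,1) and ψ(x) ∈ (−1,1) a.e. and with F′∘φ, F′∘ψ ∈ L²(Ω): ∫_Ω (a·(φ−ψ) − J∗(φ−ψ) + G′(φ) − G′(ψ))·(φ−ψ) dx ≥ (C₀ + κ − ‖J‖_{L¹(ℝⁿ)})·‖φ−ψ‖²_{L²(Ω)}. In particular, if ‖J‖_{L¹(ℝⁿ)} ≤ C₀ + κ, the left-hand side is nonnegative. -/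
/-!
Pointwise, the mean value theorem and `F'' + a ≥ C₀` give
`(a(x) (p - q) + G'(p) - G'(q)) (p - q) ≥ (C₀ + κ) (p - q)²` for `p, q ∈ (-1, 1)`.
The remaining term `∫∫ J(x - y) u(y) u(x)` is controlled by Schur's test:
`|J(x - y) u(y) u(x)| ≤ |J(x - y)| (u(x)² + u(y)²) / 2`, and by translation invariance of
Lebesgue measure every row and column of the kernel `J(x - y)` has `L¹` norm at most `‖J‖_{L¹}`.
-/

open MeasureTheory Function

theorem Convex.mul_sq_le_sub_mul_sub_of_le_hasDerivAt {D : Set ℝ} (hD : Convex ℝ D)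
    {f f' : ℝ → ℝ} (hf : ∀ x ∈ D, HasDerivAt f (f' x) x) {C : ℝ} (hC : ∀ x ∈ D, C ≤ f' x)
    {x y : ℝ} (hx : x ∈ D) (hy : y ∈ D) : C * (x - y) ^ 2 ≤ (f x - f y) * (x - y) := by
  wlog hyx : y ≤ x generalizing x y
  · linear_combination this hy hx (le_of_not_ge hyx)
  have slope := hD.mul_sub_le_image_sub_of_le_deriv
    (fun z hz => (hf z hz).continuousAt.continuousWithinAt)
    (fun z hz => (hf z (interior_subset hz)).differentiableAt.differentiableWithinAt)
    (fun z hz => (hf z (interior_subset hz)).deriv ▸ hC z (interior_subset hz)) y hy x hx hyx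
  nlinarith [sub_nonneg.2 hyx]

lemma abs_mul_mul_le_half_add (k a b : ℝ) : |k * a * b| ≤ (|k| * b ^ 2 + |k| * a ^ 2) / 2 := by
  rw [abs_mul, abs_mul]
  nlinarith [two_mul_le_add_sq |a| |b|, abs_nonneg k, sq_abs a, sq_abs b]

section Schur

variable {α β : Type*} [MeasurableSpace α] [MeasurableSpace β] {μ : Measure α} {ν : Measure β}
  [SFinite ν] {K : α → β → ℝ} {C : ℝ} {w : α → ℝ}

lemma integrable_abs_mul_of_integral_abs_le (hK : AEStronglyMeasurable (uncurry K) (μ.prod ν))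
    (hrow : ∀ x, Integrable (K x) ν) (hC : ∀ x, ∫ y, |K x y| ∂ν ≤ C) (hw : Integrable w μ) :
    Integrable (fun p : α × β => |K p.1 p.2| * w p.1) (μ.prod ν) := by
  have hmeas : AEStronglyMeasurable (fun p : α × β => |K p.1 p.2| * w p.1) (μ.prod ν) :=
    hK.norm.mul hw.aestronglyMeasurable.comp_fst
  refine (integrable_prod_iff hmeas).2 ⟨.of_forall fun x => (hrow x).abs.mul_const (w x), ?_⟩
  refine (hw.norm.const_mul C).mono' hmeas.norm.integral_prod_right' (.of_forall fun x => ?_)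
  simp only [norm_mul, norm_abs_eq_norm, Real.norm_eq_abs, integral_mul_const]
  rw [abs_of_nonneg (integral_nonneg fun _ => abs_nonneg _)]
  exact mul_le_mul_of_nonneg_right (hC x) (abs_nonneg _)

lemma integral_abs_mul_le_of_integral_abs_le [SFinite μ]
    (hK : AEStronglyMeasurable (uncurry K) (μ.prod ν)) (hrow : ∀ x, Integrable (K x) ν)
    (hC : ∀ x, ∫ y, |K x y| ∂ν ≤ C) (hw : Integrable w μ) (hw0 : 0 ≤ w) :
    ∫ p, |K p.1 p.2| * w p.1 ∂(μ.prod ν) ≤ C * ∫ x, w x ∂μ := by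
  have hint := integrable_abs_mul_of_integral_abs_le hK hrow hC hw
  rw [integral_prod _ hint, ← integral_const_mul]
  simp only [integral_mul_const]
  refine integral_mono (by simpa only [integral_mul_const] using hint.integral_prod_left)
    (hw.const_mul C) fun x => ?_
  exact mul_le_mul_of_nonneg_right (hC x) (hw0 x)

end Schur

structure IsSchurBounded {α : Type*} [MeasurableSpace α] (K : α → α → ℝ) (μ : Measure α)
    (C : ℝ) : Prop where
  aestronglyMeasurable : AEStronglyMeasurable (uncurry K) (μ.prod μ)
  integrable_row : ∀ x, Integrable (K x) μ
  integrable_col : ∀ y, Integrable (fun x => K x y) μ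
  integral_row_le : ∀ x, ∫ y, |K x y| ∂μ ≤ C
  integral_col_le : ∀ y, ∫ x, |K x y| ∂μ ≤ C

namespace IsSchurBounded

variable {α : Type*} [MeasurableSpace α] {μ : Measure α} [SFinite μ] {K : α → α → ℝ} {C : ℝ}
  {u : α → ℝ}

lemma integrable_prod_and_abs_integral_prod_le (hK : IsSchurBounded K μ C) (hu : MemLp u 2 μ) :
    Integrable (fun p : α × α => K p.1 p.2 * u p.2 * u p.1) (μ.prod μ) ∧
      |∫ p, K p.1 p.2 * u p.2 * u p.1 ∂(μ.prod μ)| ≤ C * ∫ x, u x ^ 2 ∂μ := by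
  have hu2 := hu.integrable_sq
  have hrow := integrable_abs_mul_of_integral_abs_le hK.aestronglyMeasurable hK.integrable_row
    hK.integral_row_le hu2
  have hcol : Integrable (fun p : α × α => |K p.1 p.2| * u p.2 ^ 2) (μ.prod μ) :=
    (integrable_abs_mul_of_integral_abs_le (K := fun y x => K x y)
      hK.aestronglyMeasurable.prod_swap hK.integrable_col hK.integral_col_le hu2).swap
  have hdom := (hrow.add hcol).div_const 2
  have hle : ∀ p : α × α, ‖K p.1 p.2 * u p.2 * u p.1‖ ≤
      (|K p.1 p.2| * u p.1 ^ 2 + |K p.1 p.2| * u p.2 ^ 2) / 2 :=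
    fun p => abs_mul_mul_le_half_add _ _ _
  refine ⟨hdom.mono' ((hK.aestronglyMeasurable.mul hu.1.comp_snd).mul hu.1.comp_fst)
    (.of_forall hle), ?_⟩
  calc |∫ p, K p.1 p.2 * u p.2 * u p.1 ∂(μ.prod μ)|
      ≤ ∫ p, (|K p.1 p.2| * u p.1 ^ 2 + |K p.1 p.2| * u p.2 ^ 2) / 2 ∂(μ.prod μ) :=
        norm_integral_le_of_norm_le hdom (.of_forall hle)
    _ = ((∫ p, |K p.1 p.2| * u p.1 ^ 2 ∂(μ.prod μ))
          + ∫ p, |K p.1 p.2| * u p.2 ^ 2 ∂(μ.prod μ)) / 2 := by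
        rw [integral_div, integral_add hrow hcol]
    _ ≤ (C * ∫ x, u x ^ 2 ∂μ + C * ∫ x, u x ^ 2 ∂μ) / 2 := by
        gcongr
        · exact integral_abs_mul_le_of_integral_abs_le hK.aestronglyMeasurable hK.integrable_row
            hK.integral_row_le hu2 fun _ => sq_nonneg _
        · rw [← integral_prod_swap]
          exact integral_abs_mul_le_of_integral_abs_le (K := fun y x => K x y)
            hK.aestronglyMeasurable.prod_swap hK.integrable_col hK.integral_col_le hu2
            fun _ => sq_nonneg _
    _ = C * ∫ x, u x ^ 2 ∂μ := by ring

lemma integrable_and_abs_integral_le (hK : IsSchurBounded K μ C) (hu : MemLp u 2 μ) :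
    Integrable (fun x => (∫ y, K x y * u y ∂μ) * u x) μ ∧
      |∫ x, (∫ y, K x y * u y ∂μ) * u x ∂μ| ≤ C * ∫ x, u x ^ 2 ∂μ := by
  obtain ⟨hint, hle⟩ := hK.integrable_prod_and_abs_integral_prod_le hu
  simp only [← integral_mul_const]
  exact ⟨hint.integral_prod_left, integral_prod _ hint ▸ hle⟩

lemma memLp_integral_mul {p : ENNReal} (hK : IsSchurBounded K μ C) (hu : MemLp u p μ) :
    MemLp (fun x => (∫ y, K x y ∂μ) * u x) p μ :=
  hu.of_le_mul (c := C) (hK.aestronglyMeasurable.integral_prod_right'.mul hu.1) <|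
    .of_forall fun x => by
      rw [norm_mul]
      exact mul_le_mul_of_nonneg_right
        ((abs_integral_le_integral_abs).trans (hK.integral_row_le x)) (norm_nonneg _)

theorem sub_mul_integral_sq_le (hK : IsSchurBounded K μ C) {g : α → ℝ} (hu : MemLp u 2 μ)
    (hg : MemLp g 2 μ) {m : ℝ}
    (hm : ∀ᵐ x ∂μ, m * u x ^ 2 ≤ ((∫ y, K x y ∂μ) * u x + g x) * u x) :
    (m - C) * ∫ x, u x ^ 2 ∂μ ≤
      ∫ x, ((∫ y, K x y ∂μ) * u x - (∫ y, K x y * u y ∂μ) + g x) * u x ∂μ := by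
  obtain ⟨hnonlocal, hnonlocal_le⟩ := hK.integrable_and_abs_integral_le hu
  have hlocal : Integrable (fun x => ((∫ y, K x y ∂μ) * u x + g x) * u x) μ :=
    ((hK.memLp_integral_mul hu).add hg).integrable_mul hu
  have hlocal_ge : m * ∫ x, u x ^ 2 ∂μ ≤ ∫ x, ((∫ y, K x y ∂μ) * u x + g x) * u x ∂μ := by
    rw [← integral_const_mul]
    exact integral_mono_ae (hu.integrable_sq.const_mul m) hlocal hm
  have hsplit : ∫ x, ((∫ y, K x y ∂μ) * u x - (∫ y, K x y * u y ∂μ) + g x) * u x ∂μ =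
      ∫ x, ((∫ y, K x y ∂μ) * u x + g x) * u x ∂μ - ∫ x, (∫ y, K x y * u y ∂μ) * u x ∂μ := by
    rw [← integral_sub hlocal hnonlocal]
    congr 1 with x
    ring
  linarith [(abs_le.1 hnonlocal_le).2]

end IsSchurBounded

theorem isSchurBounded_sub {G : Type*} [AddCommGroup G] [MeasurableSpace G] [MeasurableAdd₂ G]
    [MeasurableNeg G] (μ : Measure G) [SFinite μ] [μ.IsAddLeftInvariant] [μ.IsNegInvariant]
    {J : G → ℝ} (hJ : Integrable J μ) (Ω : Set G) :
    IsSchurBounded (fun x y => J (x - y)) (μ.restrict Ω) (∫ x, |J x| ∂μ) where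
  aestronglyMeasurable := by
    refine (hJ.1.comp_quasiMeasurePreserving (quasiMeasurePreserving_sub μ μ)).mono_ac ?_
    rw [Measure.prod_restrict]
    exact Measure.restrict_le_self.absolutelyContinuous
  integrable_row x := (hJ.comp_sub_left x).restrict
  integrable_col y := (hJ.comp_sub_right y).restrict
  integral_row_le x :=
    (setIntegral_le_integral (hJ.comp_sub_left x).abs (.of_forall fun _ => abs_nonneg _)).trans
      (integral_sub_left_eq_self (fun z => |J z|) μ x).le
  integral_col_le y :=
    (setIntegral_le_integral (hJ.comp_sub_right y).abs (.of_forall fun _ => abs_nonneg _)).trans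
      (integral_sub_right_eq_self (fun z => |J z|) y).le

theorem subgradient_strong_monotonicity_general
    {n : ℕ} (Ω : Set (EuclideanSpace ℝ (Fin n)))
    (J : EuclideanSpace ℝ (Fin n) → ℝ)
    (hJint : Integrable J)
    (F' F'' : ℝ → ℝ) (κ C₀ : ℝ)
    (hF'' : ∀ s ∈ Set.Ioo (-1 : ℝ) 1, HasDerivAt F' (F'' s) s)
    (hcoer : ∀ᵐ x ∂(volume.restrict Ω),
      ∀ s ∈ Set.Ioo (-1 : ℝ) 1, C₀ ≤ F'' s + (∫ y in Ω, J (x - y)))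
    (φ ψ : EuclideanSpace ℝ (Fin n) → ℝ)
    (hφ : MemLp φ 2 (volume.restrict Ω))
    (hψ : MemLp ψ 2 (volume.restrict Ω))
    (hφran : ∀ᵐ x ∂(volume.restrict Ω), φ x ∈ Set.Ioo (-1 : ℝ) 1)
    (hψran : ∀ᵐ x ∂(volume.restrict Ω), ψ x ∈ Set.Ioo (-1 : ℝ) 1)
    (hF'φ : MemLp (fun x => F' (φ x)) 2 (volume.restrict Ω))
    (hF'ψ : MemLp (fun x => F' (ψ x)) 2 (volume.restrict Ω)) :
    (C₀ + κ - ∫ x, |J x|) * (∫ x in Ω, (φ x - ψ x) ^ 2)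
      ≤ ∫ x in Ω,
          ((∫ y in Ω, J (x - y)) * (φ x - ψ x)
            - (∫ y in Ω, J (x - y) * (φ y - ψ y))
            + ((F' (φ x) + κ * φ x) - (F' (ψ x) + κ * ψ x))) * (φ x - ψ x)
    ∧ ((∫ x, |J x|) ≤ C₀ + κ →
        0 ≤ ∫ x in Ω,
          ((∫ y in Ω, J (x - y)) * (φ x - ψ x)
            - (∫ y in Ω, J (x - y) * (φ y - ψ y))
            + ((F' (φ x) + κ * φ x) - (F' (ψ x) + κ * ψ x))) * (φ x - ψ x)) := by
  have hpointwise : ∀ᵐ x ∂(volume.restrict Ω), (C₀ + κ) * (φ x - ψ x) ^ 2 ≤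
      ((∫ y in Ω, J (x - y)) * (φ x - ψ x)
        + ((F' (φ x) + κ * φ x) - (F' (ψ x) + κ * ψ x))) * (φ x - ψ x) := by
    filter_upwards [hcoer, hφran, hψran] with x hcoer_x hφx hψx
    have hF'_mono := (convex_Ioo (-1 : ℝ) 1).mul_sq_le_sub_mul_sub_of_le_hasDerivAt hF''
      (C := C₀ - ∫ y in Ω, J (x - y)) (fun s hs => by linarith [hcoer_x s hs]) hφx hψx
    linear_combination hF'_mono
  have hmain := (isSchurBounded_sub volume hJint Ω).sub_mul_integral_sq_le (u := fun x => φ x - ψ x)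
    (hφ.sub hψ) ((hF'φ.add (hφ.const_mul κ)).sub (hF'ψ.add (hψ.const_mul κ))) hpointwise
  exact ⟨hmain, fun hJ =>
    (mul_nonneg (sub_nonneg.2 hJ) (integral_nonneg fun _ => sq_nonneg _)).trans hmain⟩

/-- **Strong monotonicity of the subgradient (Claim (1) in Lemma 3.10).**
Let `F` be twice continuously differentiable on `(-1,1)`, `κ ≥ 0`, `C₀ > 0`,
and assume `F''(s) + a(x) ≥ C₀` for all `s ∈ (-1,1)` and a.e. `x ∈ Ω`, where
`a(x) = ∫_Ω J(x-y) dy`.  With `G'(s) = F'(s) + κ s`, for all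
`φ, ψ ∈ L²(Ω)` taking values in `(-1,1)` a.e. with `F'∘φ, F'∘ψ ∈ L²(Ω)`:
`∫_Ω (a(φ-ψ) - J∗(φ-ψ) + G'(φ) - G'(ψ))(φ-ψ) dx
   ≥ (C₀ + κ - ‖J‖_{L¹}) ‖φ-ψ‖²`,
and in particular the left-hand side is nonnegative if `‖J‖_{L¹} ≤ C₀ + κ`. -/
theorem subgradient_strong_monotonicity
    {n : ℕ} (Ω : Set (EuclideanSpace ℝ (Fin n)))
    (hΩmeas : MeasurableSet Ω) (hΩbdd : Bornology.IsBounded Ω)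
    (hΩpos : 0 < volume Ω)
    (J : EuclideanSpace ℝ (Fin n) → ℝ)
    (hJint : Integrable J)
    (hJsymm : ∀ᵐ x ∂(volume : Measure (EuclideanSpace ℝ (Fin n))), J x = J (-x))
    (F F' F'' : ℝ → ℝ) (κ C₀ : ℝ) (hκ : 0 ≤ κ) (hC₀ : 0 < C₀)
    (hF' : ∀ s ∈ Set.Ioo (-1 : ℝ) 1, HasDerivAt F (F' s) s)
    (hF'' : ∀ s ∈ Set.Ioo (-1 : ℝ) 1, HasDerivAt F' (F'' s) s)
    (hF''cont : ContinuousOn F'' (Set.Ioo (-1 : ℝ) 1))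
    (hcoer : ∀ᵐ x ∂(volume.restrict Ω),
      ∀ s ∈ Set.Ioo (-1 : ℝ) 1, C₀ ≤ F'' s + (∫ y in Ω, J (x - y)))
    (φ ψ : EuclideanSpace ℝ (Fin n) → ℝ)
    (hφ : MemLp φ 2 (volume.restrict Ω))
    (hψ : MemLp ψ 2 (volume.restrict Ω))
    (hφran : ∀ᵐ x ∂(volume.restrict Ω), φ x ∈ Set.Ioo (-1 : ℝ) 1)
    (hψran : ∀ᵐ x ∂(volume.restrict Ω), ψ x ∈ Set.Ioo (-1 : ℝ) 1)
    (hF'φ : MemLp (fun x => F' (φ x)) 2 (volume.restrict Ω))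
    (hF'ψ : MemLp (fun x => F' (ψ x)) 2 (volume.restrict Ω)) :
    (C₀ + κ - ∫ x, |J x|) * (∫ x in Ω, (φ x - ψ x) ^ 2)
      ≤ ∫ x in Ω,
          ((∫ y in Ω, J (x - y)) * (φ x - ψ x)
            - (∫ y in Ω, J (x - y) * (φ y - ψ y))
            + ((F' (φ x) + κ * φ x) - (F' (ψ x) + κ * ψ x))) * (φ x - ψ x)
    ∧ ((∫ x, |J x|) ≤ C₀ + κ →
        0 ≤ ∫ x in Ω,
          ((∫ y in Ω, J (x - y)) * (φ x - ψ x)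
            - (∫ y in Ω, J (x - y) * (φ y - ψ y))
            + ((F' (φ x) + κ * φ x) - (F' (ψ x) + κ * ψ x))) * (φ x - ψ x)) :=
  subgradient_strong_monotonicity_general Ω J hJint F' F'' κ C₀ hF'' hcoer φ ψ hφ hψ hφran hψran
    hF'φ hF'ψ
end

section
/- Let G : ℝ → [0,∞] be lower semicontinuous. Then the functional f : L²(Ω) → (−∞,∞] defined by f(φ) := (1/4)∫_Ω∫_Ω J(x−y)(φ(x)−φ(y))² dx dy + ∫_Ω G(φ(x)) dx is sequentially lower semicontinuous with respect to the L²(Ω) norm: whenever φ_k → φ in L²(Ω), one has f(φ) ≤ liminf_{k→∞} f(φ_k). -/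
/-
The free energy is a quarter of the nonlocal energy `E(ψ) = ∫∫_{Ω×Ω} J(x-y)(ψ(x)-ψ(y))²`
plus the potential term `∫_Ω G(ψ)`.

The nonlocal energy is even continuous on `L²(Ω)`. Both `∫_Ω |J(x-y)| dy` and `∫_Ω |J(x-y)| dx`
are at most `‖J‖₁`, so Schur's test gives `∫∫ |J(x-y)| |ψ(x)-ψ(y)|² ≤ 4‖J‖₁‖ψ‖₂²`; writing
`a² - b² = (a - b)(a + b)` and applying Cauchy–Schwarz with the weight `|J(x-y)|` then yields
`|E(ψ₁) - E(ψ₂)| ≤ 4‖J‖₁ ‖ψ₁ - ψ₂‖₂ ‖ψ₁ + ψ₂‖₂`.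

The potential term is lower semicontinuous under convergence in measure: pick a subsequence
realising the `liminf`, extract a further subsequence converging a.e., and apply Fatou's lemma
together with the lower semicontinuity of `G`.
-/

open MeasureTheory Filter Topology ENNReal

/-- The free energy functional
`f(φ) = (1/4)∫_Ω∫_Ω J(x-y)(φ(x)-φ(y))² dx dy + ∫_Ω G(φ(x)) dx`,
with values in `(-∞, ∞]` (the potential term `G` takes values in `[0,∞]`). -/
noncomputable def freeEnergy {n : ℕ} (Ω : Set (EuclideanSpace ℝ (Fin n)))
    (J : EuclideanSpace ℝ (Fin n) → ℝ) (G : ℝ → ENNReal)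
    (φ : EuclideanSpace ℝ (Fin n) → ℝ) : EReal :=
  (((1 / 4 : ℝ) * ∫ x in Ω, ∫ y in Ω, J (x - y) * (φ x - φ y) ^ 2 : ℝ) : EReal)
    + ((∫⁻ x in Ω, G (φ x) : ENNReal) : EReal)

lemma enorm_sq_eq_ofReal_sq (x : ℝ) : ‖x‖ₑ ^ 2 = ENNReal.ofReal (x ^ 2) := by
  rw [Real.enorm_eq_ofReal_abs, ← ENNReal.ofReal_pow (abs_nonneg x), sq_abs]

lemma enorm_sub_sq_le (a b : ℝ) : ‖a - b‖ₑ ^ 2 ≤ 2 * ‖a‖ₑ ^ 2 + 2 * ‖b‖ₑ ^ 2 := by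
  simp_rw [enorm_sq_eq_ofReal_sq]
  rw [← ENNReal.ofReal_ofNat 2, ← ENNReal.ofReal_mul zero_le_two, ← ENNReal.ofReal_mul zero_le_two,
    ← ENNReal.ofReal_add (by positivity) (by positivity)]
  exact ENNReal.ofReal_le_ofReal (by nlinarith [sq_nonneg (a + b)])

lemma eLpNorm_two_sq {α E : Type*} [MeasurableSpace α] [NormedAddCommGroup E] {μ : Measure α}
    (f : α → E) :
    eLpNorm f 2 μ ^ 2 = ∫⁻ x, ‖f x‖ₑ ^ 2 ∂μ := by
  simpa using eLpNorm_nnreal_pow_eq_lintegral (f := f) (μ := μ) (p := 2) two_ne_zero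

lemma sq_lintegral_mul_mul_le {α : Type*} [MeasurableSpace α] {μ : Measure α}
    {w f g : α → ℝ≥0∞} (hw : AEMeasurable w μ) (hf : AEMeasurable f μ) (hg : AEMeasurable g μ) :
    (∫⁻ a, w a * (f a * g a) ∂μ) ^ 2 ≤ (∫⁻ a, w a * f a ^ 2 ∂μ) * ∫⁻ a, w a * g a ^ 2 ∂μ := by
  have hpt : ∀ a,
      w a * (f a * g a) = (w a * f a ^ 2) ^ (1/2 : ℝ) * (w a * g a ^ 2) ^ (1/2 : ℝ) := by
    intro a
    rw [← ENNReal.mul_rpow_of_nonneg _ _ (by norm_num),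
      show w a * f a ^ 2 * (w a * g a ^ 2) = (w a * (f a * g a)) ^ (2 : ℝ) by
        rw [ENNReal.rpow_two]; ring,
      ← ENNReal.rpow_mul]
    norm_num
  have hHolder := lintegral_mul_norm_pow_le (μ := μ) (hw.mul (hf.pow_const 2)) (hw.mul (hg.pow_const 2))
    (p := 1/2) (q := 1/2) (by norm_num) (by norm_num) (by norm_num)
  calc _ = (∫⁻ a, (w a * f a ^ 2) ^ (1/2 : ℝ) * (w a * g a ^ 2) ^ (1/2 : ℝ) ∂μ) ^ 2 := by
        simp_rw [hpt]
    _ ≤ ((∫⁻ a, w a * f a ^ 2 ∂μ) ^ (1/2 : ℝ) * (∫⁻ a, w a * g a ^ 2 ∂μ) ^ (1/2 : ℝ)) ^ 2 :=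
        pow_le_pow_left' hHolder 2
    _ = _ := by
      rw [mul_pow, ← ENNReal.rpow_natCast, ← ENNReal.rpow_natCast (n := 2), ← ENNReal.rpow_mul,
        ← ENNReal.rpow_mul]
      norm_num

theorem tendsto_eLpNorm_two_of_tendsto_integral_sq {α : Type*} [MeasurableSpace α]
    {μ : Measure α} {f : ℕ → α → ℝ} (hf : ∀ k, MemLp (f k) 2 μ)
    (h : Tendsto (fun k => ∫ x, f k x ^ 2 ∂μ) atTop (𝓝 0)) :
    Tendsto (fun k => eLpNorm (f k) 2 μ) atTop (𝓝 0) := by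
  have hcont : Tendsto (fun t : ℝ => ENNReal.ofReal (t ^ (2⁻¹ : ℝ))) (𝓝 0) (𝓝 0) := by
    simpa [Function.comp_def] using (ENNReal.continuous_ofReal.comp
      (Real.continuous_rpow_const (by norm_num : (0 : ℝ) ≤ 2⁻¹))).tendsto 0
  refine (hcont.comp h).congr fun k => ?_
  simp [(hf k).eLpNorm_eq_integral_rpow_norm two_ne_zero ofNat_ne_top]

section Schur

variable {α β : Type*} [MeasurableSpace α] [MeasurableSpace β] {μ : Measure α} {ν : Measure β}
  [SFinite ν] {w : α × β → ℝ≥0∞} {K : ℝ≥0∞}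

lemma lintegral_mul_comp_fst_le (hw : AEMeasurable w (μ.prod ν))
    (hK : ∀ x, ∫⁻ y, w (x, y) ∂ν ≤ K) {f : α → ℝ≥0∞} (hf : AEMeasurable f μ)
    (hf_top : ∀ x, f x ≠ ∞) :
    ∫⁻ p, w p * f p.1 ∂(μ.prod ν) ≤ K * ∫⁻ x, f x ∂μ := by
  rw [lintegral_prod (fun p => w p * f p.1) (hw.mul (hf.comp_quasiMeasurePreserving
    Measure.quasiMeasurePreserving_fst)), ← lintegral_const_mul'' K hf]
  refine lintegral_mono fun x => ?_
  rw [lintegral_mul_const' _ _ (hf_top x)]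
  exact mul_le_mul_left (hK x) _

lemma lintegral_mul_comp_snd_le [SFinite μ] (hw : AEMeasurable w (μ.prod ν))
    (hK : ∀ y, ∫⁻ x, w (x, y) ∂μ ≤ K) {f : β → ℝ≥0∞} (hf : AEMeasurable f ν)
    (hf_top : ∀ y, f y ≠ ∞) :
    ∫⁻ p, w p * f p.2 ∂(μ.prod ν) ≤ K * ∫⁻ y, f y ∂ν := by
  rw [← lintegral_prod_swap]
  exact lintegral_mul_comp_fst_le (w := w ∘ Prod.swap)
    (hw.comp_quasiMeasurePreserving (Measure.measurePreserving_swap).quasiMeasurePreserving)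
    hK hf hf_top

end Schur

lemma MeasureTheory.AEStronglyMeasurable.comp_fst_sub_comp_snd {α : Type*} [MeasurableSpace α]
    {μ : Measure α} {f : α → ℝ} (hf : AEStronglyMeasurable f μ) :
    AEStronglyMeasurable (fun p : α × α => f p.1 - f p.2) (μ.prod μ) :=
  (hf.comp_quasiMeasurePreserving Measure.quasiMeasurePreserving_fst).sub
    (hf.comp_quasiMeasurePreserving Measure.quasiMeasurePreserving_snd)

section NonlocalEnergy

variable {α : Type*} [MeasurableSpace α] {μ : Measure α} [SFinite μ] {K : ℝ≥0∞}

lemma lintegral_mul_enorm_sub_sq_le {w : α × α → ℝ≥0∞} (hw : AEMeasurable w (μ.prod μ))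
    (hK₁ : ∀ x, ∫⁻ y, w (x, y) ∂μ ≤ K) (hK₂ : ∀ y, ∫⁻ x, w (x, y) ∂μ ≤ K) {ψ : α → ℝ}
    (hψ : AEMeasurable ψ μ) :
    ∫⁻ p, w p * ‖ψ p.1 - ψ p.2‖ₑ ^ 2 ∂(μ.prod μ) ≤ 4 * K * eLpNorm ψ 2 μ ^ 2 := by
  set f : α → ℝ≥0∞ := fun x => 2 * ‖ψ x‖ₑ ^ 2
  have hf : AEMeasurable f μ := (hψ.enorm.pow_const 2).const_mul 2
  have hf_top : ∀ x, f x ≠ ∞ := fun x => by simp [f, ENNReal.mul_eq_top]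
  calc ∫⁻ p, w p * ‖ψ p.1 - ψ p.2‖ₑ ^ 2 ∂(μ.prod μ)
      ≤ ∫⁻ p, w p * f p.1 + w p * f p.2 ∂(μ.prod μ) :=
        lintegral_mono fun p => by rw [← mul_add]; exact mul_le_mul_right (enorm_sub_sq_le _ _) _
    _ = ∫⁻ p, w p * f p.1 ∂(μ.prod μ) + ∫⁻ p, w p * f p.2 ∂(μ.prod μ) :=
        lintegral_add_left' (hw.mul (hf.comp_quasiMeasurePreserving
          Measure.quasiMeasurePreserving_fst)) _
    _ ≤ K * ∫⁻ x, f x ∂μ + K * ∫⁻ x, f x ∂μ :=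
        add_le_add (lintegral_mul_comp_fst_le hw hK₁ hf hf_top)
          (lintegral_mul_comp_snd_le hw hK₂ hf hf_top)
    _ = 4 * K * eLpNorm ψ 2 μ ^ 2 := by
        rw [lintegral_const_mul'' 2 (hψ.enorm.pow_const 2), eLpNorm_two_sq]
        ring

noncomputable def nonlocalEnergy (μ : Measure α) (W : α × α → ℝ) (ψ : α → ℝ) : ℝ :=
  ∫ p, W p * (ψ p.1 - ψ p.2) ^ 2 ∂(μ.prod μ)

variable {W : α × α → ℝ}

lemma integrable_mul_sub_sq (hW : AEStronglyMeasurable W (μ.prod μ))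
    (hK₁ : ∀ x, ∫⁻ y, ‖W (x, y)‖ₑ ∂μ ≤ K) (hK₂ : ∀ y, ∫⁻ x, ‖W (x, y)‖ₑ ∂μ ≤ K) (hK : K ≠ ∞)
    {ψ : α → ℝ} (hψ : MemLp ψ 2 μ) :
    Integrable (fun p => W p * (ψ p.1 - ψ p.2) ^ 2) (μ.prod μ) := by
  refine ⟨hW.mul (hψ.1.comp_fst_sub_comp_snd.pow 2), ?_⟩
  simp only [HasFiniteIntegral, enorm_mul, enorm_pow]
  exact (lintegral_mul_enorm_sub_sq_le hW.enorm hK₁ hK₂ hψ.1.aemeasurable).trans_lt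
    (by finiteness [hψ.eLpNorm_ne_top])

lemma enorm_nonlocalEnergy_sub_le (hW : AEStronglyMeasurable W (μ.prod μ))
    (hK₁ : ∀ x, ∫⁻ y, ‖W (x, y)‖ₑ ∂μ ≤ K) (hK₂ : ∀ y, ∫⁻ x, ‖W (x, y)‖ₑ ∂μ ≤ K) (hK : K ≠ ∞)
    {ψ₁ ψ₂ : α → ℝ} (hψ₁ : MemLp ψ₁ 2 μ) (hψ₂ : MemLp ψ₂ 2 μ) :
    ‖nonlocalEnergy μ W ψ₁ - nonlocalEnergy μ W ψ₂‖ₑ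
      ≤ 4 * K * eLpNorm (ψ₁ - ψ₂) 2 μ * eLpNorm (ψ₁ + ψ₂) 2 μ := by
  set δ := ψ₁ - ψ₂
  set σ := ψ₁ + ψ₂
  have hdiff : nonlocalEnergy μ W ψ₁ - nonlocalEnergy μ W ψ₂
      = ∫ p, W p * ((δ p.1 - δ p.2) * (σ p.1 - σ p.2)) ∂(μ.prod μ) := by
    rw [nonlocalEnergy, nonlocalEnergy, ← integral_sub (integrable_mul_sub_sq hW hK₁ hK₂ hK hψ₁)
      (integrable_mul_sub_sq hW hK₁ hK₂ hK hψ₂)]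
    congr 1 with p
    simp only [δ, σ, Pi.sub_apply, Pi.add_apply]
    ring
  rw [← ENNReal.pow_le_pow_left_iff two_ne_zero]
  calc ‖nonlocalEnergy μ W ψ₁ - nonlocalEnergy μ W ψ₂‖ₑ ^ 2
      ≤ (∫⁻ p, ‖W p‖ₑ * (‖δ p.1 - δ p.2‖ₑ * ‖σ p.1 - σ p.2‖ₑ) ∂(μ.prod μ)) ^ 2 := by
        rw [hdiff]
        gcongr
        simpa only [enorm_mul] using
          enorm_integral_le_lintegral_enorm (fun p => W p * ((δ p.1 - δ p.2) * (σ p.1 - σ p.2)))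
    _ ≤ (∫⁻ p, ‖W p‖ₑ * ‖δ p.1 - δ p.2‖ₑ ^ 2 ∂(μ.prod μ))
          * ∫⁻ p, ‖W p‖ₑ * ‖σ p.1 - σ p.2‖ₑ ^ 2 ∂(μ.prod μ) :=
        sq_lintegral_mul_mul_le hW.enorm (hψ₁.1.sub hψ₂.1).comp_fst_sub_comp_snd.enorm
          (hψ₁.1.add hψ₂.1).comp_fst_sub_comp_snd.enorm
    _ ≤ (4 * K * eLpNorm δ 2 μ ^ 2) * (4 * K * eLpNorm σ 2 μ ^ 2) :=
        mul_le_mul' (lintegral_mul_enorm_sub_sq_le hW.enorm hK₁ hK₂ (hψ₁.1.sub hψ₂.1).aemeasurable)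
          (lintegral_mul_enorm_sub_sq_le hW.enorm hK₁ hK₂ (hψ₁.1.add hψ₂.1).aemeasurable)
    _ = (4 * K * eLpNorm δ 2 μ * eLpNorm σ 2 μ) ^ 2 := by ring

theorem tendsto_nonlocalEnergy (hW : AEStronglyMeasurable W (μ.prod μ))
    (hK₁ : ∀ x, ∫⁻ y, ‖W (x, y)‖ₑ ∂μ ≤ K) (hK₂ : ∀ y, ∫⁻ x, ‖W (x, y)‖ₑ ∂μ ≤ K) (hK : K ≠ ∞)
    {ψ : α → ℝ} {ψs : ℕ → α → ℝ} (hψ : MemLp ψ 2 μ) (hψs : ∀ k, MemLp (ψs k) 2 μ)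
    (h : Tendsto (fun k => eLpNorm (ψs k - ψ) 2 μ) atTop (𝓝 0)) :
    Tendsto (fun k => nonlocalEnergy μ W (ψs k)) atTop (𝓝 (nonlocalEnergy μ W ψ)) := by
  have hsum : ∀ k, eLpNorm (ψs k + ψ) 2 μ ≤ eLpNorm (ψs k - ψ) 2 μ + 2 * eLpNorm ψ 2 μ := by
    intro k
    calc eLpNorm (ψs k + ψ) 2 μ = eLpNorm ((ψs k - ψ) + (ψ + ψ)) 2 μ := by congr 1; abel
      _ ≤ eLpNorm (ψs k - ψ) 2 μ + (eLpNorm ψ 2 μ + eLpNorm ψ 2 μ) :=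
        (eLpNorm_add_le ((hψs k).1.sub hψ.1) (hψ.1.add hψ.1) one_le_two).trans
          (add_le_add_right (eLpNorm_add_le hψ.1 hψ.1 one_le_two) _)
      _ = eLpNorm (ψs k - ψ) 2 μ + 2 * eLpNorm ψ 2 μ := by rw [two_mul]
  have hbound : Tendsto (fun k => 4 * K * eLpNorm (ψs k - ψ) 2 μ
      * (eLpNorm (ψs k - ψ) 2 μ + 2 * eLpNorm ψ 2 μ)) atTop (𝓝 0) := by
    have hψ_top := hψ.eLpNorm_ne_top
    simpa using ENNReal.Tendsto.mul (ENNReal.Tendsto.const_mul h (Or.inr (by finiteness)))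
      (Or.inr (by finiteness)) (h.add_const _) (Or.inr (by simp))
  rw [tendsto_iff_edist_tendsto_0]
  refine tendsto_of_tendsto_of_tendsto_of_le_of_le tendsto_const_nhds hbound (fun _ => zero_le)
    fun k => ?_
  rw [edist_eq_enorm_sub]
  exact (enorm_nonlocalEnergy_sub_le hW hK₁ hK₂ hK (hψs k) hψ).trans (by gcongr; exact hsum k)

end NonlocalEnergy

theorem lintegral_comp_le_liminf_of_tendstoInMeasure {α E : Type*} [MeasurableSpace α]
    {μ : Measure α} [PseudoEMetricSpace E] [MeasurableSpace E] [OpensMeasurableSpace E]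
    {G : E → ℝ≥0∞} (hG : LowerSemicontinuous G) {f : ℕ → α → E} {g : α → E}
    (hf : ∀ k, AEMeasurable (f k) μ) (hfg : TendstoInMeasure μ f atTop g) :
    ∫⁻ x, G (g x) ∂μ ≤ liminf (fun k => ∫⁻ x, G (f k x) ∂μ) atTop := by
  obtain ⟨ns, hns_lim, hns⟩ :=
    exists_seq_tendsto_liminf (f := atTop) (u := fun k => ∫⁻ x, G (f k x) ∂μ)
  obtain ⟨ms, hms, hae⟩ := (hfg.comp hns).exists_seq_tendsto_ae
  calc ∫⁻ x, G (g x) ∂μ ≤ ∫⁻ x, liminf (fun i => G (f (ns (ms i)) x)) atTop ∂μ :=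
        lintegral_mono_ae (hae.mono fun x hx => (hG.le_liminf _).trans hx.liminf_le_liminf_comp)
    _ ≤ liminf (fun i => ∫⁻ x, G (f (ns (ms i)) x) ∂μ) atTop :=
        lintegral_liminf_le' fun i => hG.measurable.comp_aemeasurable (hf _)
    _ = liminf (fun k => ∫⁻ x, G (f k x) ∂μ) atTop :=
        (hns_lim.comp hms.tendsto_atTop).liminf_eq

lemma EReal.coe_ennreal_le_liminf {a : ℝ≥0∞} {u : ℕ → ℝ≥0∞} (h : a ≤ liminf u atTop) :
    (a : EReal) ≤ liminf (fun k => (u k : EReal)) atTop :=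
  (EReal.coe_ennreal_le_coe_ennreal_iff.2 h).trans_eq <|
    Monotone.map_liminf_of_continuousAt (fun _ _ => EReal.coe_ennreal_le_coe_ennreal_iff.2) u
      continuous_coe_ennreal_ereal.continuousAt

section TranslationKernel

variable {E : Type*} [MeasurableSpace E] [AddCommGroup E] [MeasurableAdd₂ E]
  {ν : Measure E} [ν.IsAddLeftInvariant] {J : E → ℝ}

lemma MeasureTheory.AEStronglyMeasurable.comp_fst_sub_snd [MeasurableNeg E] [SFinite ν]
    (hJ : AEStronglyMeasurable J ν) (Ω : Set E) :
    AEStronglyMeasurable (fun p : E × E => J (p.1 - p.2)) ((ν.restrict Ω).prod (ν.restrict Ω)) :=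
  hJ.comp_quasiMeasurePreserving <| (quasiMeasurePreserving_sub ν ν).mono
    (Measure.restrict_le_self.absolutelyContinuous.prod
      Measure.restrict_le_self.absolutelyContinuous) .rfl

lemma setLIntegral_enorm_sub_left_le [MeasurableNeg E] [ν.IsNegInvariant] (Ω : Set E) (x : E) :
    ∫⁻ y in Ω, ‖J (x - y)‖ₑ ∂ν ≤ ∫⁻ z, ‖J z‖ₑ ∂ν :=
  (setLIntegral_le_lintegral Ω _).trans_eq (lintegral_sub_left_eq_self (fun z => ‖J z‖ₑ) x)

lemma setLIntegral_enorm_sub_right_le (Ω : Set E) (y : E) :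
    ∫⁻ x in Ω, ‖J (x - y)‖ₑ ∂ν ≤ ∫⁻ z, ‖J z‖ₑ ∂ν :=
  (setLIntegral_le_lintegral Ω _).trans_eq (lintegral_sub_right_eq_self (fun z => ‖J z‖ₑ) y)

end TranslationKernel

theorem freeEnergy_lowerSemicontinuous_general
    {n : ℕ} (Ω : Set (EuclideanSpace ℝ (Fin n)))
    (J : EuclideanSpace ℝ (Fin n) → ℝ)
    (hJint : Integrable J)
    (G : ℝ → ENNReal) (hG : LowerSemicontinuous G) :
    ∀ (φ : EuclideanSpace ℝ (Fin n) → ℝ)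
      (φk : ℕ → EuclideanSpace ℝ (Fin n) → ℝ),
      MemLp φ 2 (volume.restrict Ω) →
      (∀ k, MemLp (φk k) 2 (volume.restrict Ω)) →
      Filter.Tendsto (fun k => ∫ x in Ω, (φk k x - φ x) ^ 2)
        Filter.atTop (nhds 0) →
      freeEnergy Ω J G φ
        ≤ Filter.liminf (fun k => freeEnergy Ω J G (φk k)) Filter.atTop := by
  intro φ φk hφ hφk hconv
  set μ := volume.restrict Ω
  set W := fun p : EuclideanSpace ℝ (Fin n) × EuclideanSpace ℝ (Fin n) => J (p.1 - p.2)
  have hW : AEStronglyMeasurable W (μ.prod μ) := hJint.aestronglyMeasurable.comp_fst_sub_snd Ω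
  have hK₁ := setLIntegral_enorm_sub_left_le (J := J) (ν := volume) Ω
  have hK₂ := setLIntegral_enorm_sub_right_le (J := J) (ν := volume) Ω
  have hK : ∫⁻ z, ‖J z‖ₑ ≠ ∞ := hJint.2.ne
  have hsplit : ∀ ψ, MemLp ψ 2 μ → freeEnergy Ω J G ψ
      = ((1 / 4 * nonlocalEnergy μ W ψ : ℝ) : EReal) + ((∫⁻ x in Ω, G (ψ x) : ℝ≥0∞) : EReal) :=
    fun ψ hψ => by rw [freeEnergy, nonlocalEnergy, integral_integral
      (integrable_mul_sub_sq hW hK₁ hK₂ hK hψ)]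
  have hL2 := tendsto_eLpNorm_two_of_tendsto_integral_sq (fun k => (hφk k).sub hφ) hconv
  have hE : Tendsto (fun k => ((1 / 4 * nonlocalEnergy μ W (φk k) : ℝ) : EReal)) atTop
      (𝓝 ((1 / 4 * nonlocalEnergy μ W φ : ℝ) : EReal)) :=
    EReal.tendsto_coe.2 ((tendsto_nonlocalEnergy hW hK₁ hK₂ hK hφ hφk hL2).const_mul _)
  have hpot := EReal.coe_ennreal_le_liminf <| lintegral_comp_le_liminf_of_tendstoInMeasure hG
    (fun k => (hφk k).1.aemeasurable)
    (tendstoInMeasure_of_tendsto_eLpNorm two_ne_zero (fun k => (hφk k).1) hφ.1 hL2)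
  simp_rw [hsplit φ hφ, hsplit _ (hφk _)]
  calc _ ≤ liminf (fun k => ((1 / 4 * nonlocalEnergy μ W (φk k) : ℝ) : EReal)) atTop
        + liminf (fun k => ((∫⁻ x in Ω, G (φk k x) : ℝ≥0∞) : EReal)) atTop := by
        rw [hE.liminf_eq]
        exact add_le_add_right hpot _
    _ ≤ _ := EReal.le_liminf_add

/-- **Lower semicontinuity of the free energy functional (Claim (2) of
Lemma 3.10).**  Let `G : ℝ → [0,∞]` be lower semicontinuous.  Then the
functional `f` is sequentially lower semicontinuous with respect to the
`L²(Ω)` norm: whenever `φ_k → φ` in `L²(Ω)`, one has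
`f(φ) ≤ liminf_{k→∞} f(φ_k)`. -/
theorem freeEnergy_lowerSemicontinuous
    {n : ℕ} (Ω : Set (EuclideanSpace ℝ (Fin n)))
    (hΩmeas : MeasurableSet Ω) (hΩbdd : Bornology.IsBounded Ω)
    (hΩpos : 0 < volume Ω)
    (J : EuclideanSpace ℝ (Fin n) → ℝ)
    (hJint : Integrable J)
    (hJsymm : ∀ᵐ x ∂(volume : Measure (EuclideanSpace ℝ (Fin n))), J x = J (-x))
    (G : ℝ → ENNReal) (hG : LowerSemicontinuous G) :
    ∀ (φ : EuclideanSpace ℝ (Fin n) → ℝ)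
      (φk : ℕ → EuclideanSpace ℝ (Fin n) → ℝ),
      MemLp φ 2 (volume.restrict Ω) →
      (∀ k, MemLp (φk k) 2 (volume.restrict Ω)) →
      Filter.Tendsto (fun k => ∫ x in Ω, (φk k x - φ x) ^ 2)
        Filter.atTop (nhds 0) →
      freeEnergy Ω J G φ
        ≤ Filter.liminf (fun k => freeEnergy Ω J G (φk k)) Filter.atTop :=
  freeEnergy_lowerSemicontinuous_general Ω J hJint G hG
end

section
/- Let Ω ⊂ ℝⁿ be bounded and open, p ≥ 2, C₀ > 0, J ∈ W^{1,1}(ℝⁿ), and F twice continuously differentiable on (−1,1) with a(x) + F″(s) ≥ C₀ for all s ∈ (−1,1) and a.e. x ∈ Ω. Let φ ∈ Lᵖ(Ω) with φ(x) ∈ (−1,1) a.e., and suppose measurable vector fields dφ, dμ : Ω → ℝⁿ belong to Lᵖ(Ω;ℝⁿ) and satisfy the pointwise identity dμ(x) = (a(x) + F″(φ(x)))·dφ(x) + φ(x)·∇a(x) − (∇J∗φ)(x) for a.e. x ∈ Ω, where ∇a(x) := ∫_Ω ∇J(x−y) dy and (∇J∗φ)(x) := ∫_Ω ∇J(x−y)φ(y)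 dy. Then (C₀/4)·‖dφ‖_{Lᵖ(Ω)}ᵖ ≤ (1/p)·(2(p−1)/(C₀p))^{p−1}·[2^{p−1}·‖dμ‖_{Lᵖ(Ω)}ᵖ + (‖∇a‖_{L∞(Ω)} + ‖∇J‖_{L¹(ℝⁿ)})ᵖ·‖φ‖_{Lᵖ(Ω)}ᵖ]. -/
/-!
Put `w := φ ∇a - ∇J ∗ φ`. The identity says `dμ - w = (a + F''(φ)) dφ`, so coercivity gives
`C₀ |dφ| ≤ |dμ| + |w|` a.e. Multiplying by `|dφ| ^ (p - 1)` and applying Young's inequality with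
weights `C₀ / 4` and `C₀ / 2` absorbs `dφ` into the left side pointwise. After integration it
remains to bound `‖w‖_p ≤ (‖∇a‖_∞ + ‖∇J‖_1) ‖φ‖_p`: the first term by Hölder, the second by
Young's convolution inequality `‖f ⋆ g‖_p ≤ ‖f‖_p ‖g‖_1`, which follows from Hölder's inequality
against the weight `|g (x - ·)|` and Tonelli.
-/

open MeasureTheory ContinuousLinearMap
open scoped ENNReal Convolution

theorem Real.mul_rpow_sub_one_le {p ε a b : ℝ} (hp : 1 < p) (hε : 0 < ε) (ha : 0 ≤ a)
    (hb : 0 ≤ b) :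
    a * b ^ (p - 1) ≤ 1 / p * ((p - 1) / (p * ε)) ^ (p - 1) * a ^ p + ε * b ^ p := by
  have hp0 : 0 < p := by linarith
  have hp1 : 0 < p - 1 := by linarith
  set s := (p - 1) / (p * ε) with hs
  have hs0 : 0 < s := by positivity
  have amgm := Real.geom_mean_le_arith_mean2_weighted (w₁ := 1 / p) (w₂ := (p - 1) / p)
    (p₁ := s ^ (p - 1) * a ^ p) (p₂ := s⁻¹ * b ^ p) (by positivity) (by positivity)
    (by positivity) (by positivity) (by field_simp; ring)
  have h₁ : (s ^ (p - 1) * a ^ p) ^ (1 / p) = s ^ ((p - 1) / p) * a := by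
    rw [Real.mul_rpow (by positivity) (by positivity), ← Real.rpow_mul hs0.le,
      ← Real.rpow_mul ha, mul_one_div, mul_one_div_cancel hp0.ne', Real.rpow_one]
  have h₂ : (s⁻¹ * b ^ p) ^ ((p - 1) / p) = (s ^ ((p - 1) / p))⁻¹ * b ^ (p - 1) := by
    rw [Real.mul_rpow (by positivity) (by positivity), Real.inv_rpow hs0.le,
      ← Real.rpow_mul hb, mul_div_cancel₀ _ hp0.ne']
  have hsq : 0 < s ^ ((p - 1) / p) := by positivity
  rw [h₁, h₂, mul_mul_mul_comm, mul_inv_cancel₀ hsq.ne', one_mul] at amgm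
  calc a * b ^ (p - 1) ≤ _ := amgm
    _ = _ := by rw [hs]; field_simp

theorem Real.mul_rpow_le_of_mul_le_add {p C u v w : ℝ} (hp : 1 < p) (hC : 0 < C) (hu : 0 ≤ u)
    (hv : 0 ≤ v) (hw : 0 ≤ w) (h : C * u ≤ v + w) :
    C / 4 * u ^ p ≤ 1 / p * (2 * (p - 1) / (C * p)) ^ (p - 1) * (2 ^ (p - 1) * v ^ p + w ^ p) := by
  have hp0 : 0 < p := by linarith
  have hp1 : 0 < p - 1 := by linarith
  set K := 1 / p * (2 * (p - 1) / (C * p)) ^ (p - 1)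
  have hsplit : C * u ^ p ≤ v * u ^ (p - 1) + w * u ^ (p - 1) :=
    calc C * u ^ p = C * u * u ^ (p - 1) := by
          rw [mul_assoc, ← Real.rpow_one_add' hu (by linarith), add_sub_cancel]
      _ ≤ (v + w) * u ^ (p - 1) := by gcongr
      _ = _ := add_mul ..
  have hv' : v * u ^ (p - 1) ≤ 2 ^ (p - 1) * K * v ^ p + C / 4 * u ^ p := by
    have := Real.mul_rpow_sub_one_le hp (by positivity : 0 < C / 4) hv hu
    rwa [show (p - 1) / (p * (C / 4)) = 2 * (2 * (p - 1) / (C * p)) by field_simp; norm_num,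
      Real.mul_rpow zero_le_two (by positivity),
      show 1 / p * (2 ^ (p - 1) * (2 * (p - 1) / (C * p)) ^ (p - 1)) = 2 ^ (p - 1) * K by ring]
      at this
  have hw' : w * u ^ (p - 1) ≤ K * w ^ p + C / 2 * u ^ p := by
    have := Real.mul_rpow_sub_one_le hp (by positivity : 0 < C / 2) hw hu
    rwa [show (p - 1) / (p * (C / 2)) = 2 * (p - 1) / (C * p) by field_simp] at this
  linarith

theorem mul_norm_le_norm_add_norm_of_eq_smul_add {E : Type*} [SeminormedAddCommGroup E]
    [NormedSpace ℝ E] {C a : ℝ} (hC : 0 ≤ C) (hCa : C ≤ a) {u v w : E} (h : u = a • v + w) :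
    C * ‖v‖ ≤ ‖u‖ + ‖w‖ :=
  calc C * ‖v‖ ≤ ‖a • v‖ := by
        rw [norm_smul, Real.norm_of_nonneg (hC.trans hCa)]; gcongr
    _ = ‖u - w‖ := by rw [h, add_sub_cancel_right]
    _ ≤ ‖u‖ + ‖w‖ := norm_sub_le u w

theorem ENNReal.self_mul_rpow_sub_one {p : ℝ} (hp : 1 ≤ p) (x : ℝ≥0∞) :
    x * x ^ (p - 1) = x ^ p := by
  simpa using (ENNReal.rpow_add_of_nonneg (x := x) 1 (p - 1) zero_le_one (by linarith)).symm

section Lp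

variable {α E F : Type*} [MeasurableSpace α] {μ : Measure α}

theorem ENNReal.lintegral_mul_rpow_le {p : ℝ} (hp : 1 < p) {a b : α → ℝ≥0∞}
    (ha : AEMeasurable a μ) (hb : AEMeasurable b μ) :
    (∫⁻ x, a x * b x ∂μ) ^ p ≤ (∫⁻ x, a x ^ p * b x ∂μ) * (∫⁻ x, b x ∂μ) ^ (p - 1) := by
  have hpq : p.HolderConjugate (p / (p - 1)) := .conjExponent hp
  have hp0 : 0 < p := hpq.pos
  have hq0 : 0 < p / (p - 1) := hpq.symm.pos
  have holder := ENNReal.lintegral_mul_le_Lp_mul_Lq μ hpq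
    (ha.mul (hb.pow_const (1 / p))) (hb.pow_const (1 / (p / (p - 1))))
  have split (x : α) : a x * b x = a x * b x ^ (1 / p) * b x ^ (1 / (p / (p - 1))) := by
    rw [mul_assoc, ← ENNReal.rpow_add_of_nonneg _ _ (by positivity) (by positivity),
      one_div, one_div, hpq.inv_add_inv_eq_one, ENNReal.rpow_one]
  simp only [Pi.mul_apply, ← split, ENNReal.mul_rpow_of_nonneg _ _ hp0.le,
    ← ENNReal.rpow_mul, one_div_mul_cancel hp0.ne', one_div_mul_cancel hq0.ne',
    ENNReal.rpow_one] at holder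
  calc (∫⁻ x, a x * b x ∂μ) ^ p
      ≤ ((∫⁻ x, a x ^ p * b x ∂μ) ^ (1 / p) * (∫⁻ x, b x ∂μ) ^ (1 / (p / (p - 1)))) ^ p :=
        ENNReal.rpow_le_rpow holder hp0.le
    _ = (∫⁻ x, a x ^ p * b x ∂μ) * (∫⁻ x, b x ∂μ) ^ (p - 1) := by
      rw [ENNReal.mul_rpow_of_nonneg _ _ hp0.le, ← ENNReal.rpow_mul, ← ENNReal.rpow_mul,
        one_div_mul_cancel hp0.ne', ENNReal.rpow_one, one_div, inv_mul_eq_div,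
        div_div_cancel₀ (by linarith)]

theorem eLpNorm_ofReal_rpow [TopologicalSpace E] [ContinuousENorm E] {p : ℝ} (hp : 0 < p)
    (f : α → E) : eLpNorm f (.ofReal p) μ ^ p = ∫⁻ x, ‖f x‖ₑ ^ p ∂μ := by
  have h := eLpNorm_nnreal_pow_eq_lintegral (f := f) (μ := μ) (p := p.toNNReal) (by simpa using hp)
  rwa [Real.coe_toNNReal _ hp.le] at h

variable [NormedAddCommGroup E] [NormedAddCommGroup F]

theorem integral_norm_rpow_eq_toReal_eLpNorm_rpow {p : ℝ} (hp : 0 < p) {f : α → E}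
    (hf : AEStronglyMeasurable f μ) :
    ∫ x, ‖f x‖ ^ p ∂μ = (eLpNorm f (.ofReal p) μ ^ p).toReal := by
  rw [eLpNorm_ofReal_rpow hp, integral_eq_lintegral_of_nonneg_ae
    (ae_of_all _ fun _ => by positivity) (hf.norm.aemeasurable.pow_const p).aestronglyMeasurable]
  simp_rw [← ofReal_norm, ENNReal.ofReal_rpow_of_nonneg (norm_nonneg _) hp.le]

theorem MeasureTheory.MemLp.integrable_norm_rpow_ofReal {p : ℝ} (hp : 0 < p) {f : α → E}
    (hf : MemLp f (.ofReal p) μ) : Integrable (fun x => ‖f x‖ ^ p) μ := by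
  simpa [ENNReal.toReal_ofReal hp.le] using
    hf.integrable_norm_rpow (by simpa using hp) ENNReal.ofReal_ne_top

theorem integral_norm_rpow_le_of_eLpNorm_le {p : ℝ} (hp : 0 < p) {c : ℝ≥0∞} (hc : c ≠ ∞)
    {f : α → E} {g : α → F} (hf : AEStronglyMeasurable f μ) (hg : MemLp g (.ofReal p) μ)
    (h : eLpNorm f (.ofReal p) μ ≤ c * eLpNorm g (.ofReal p) μ) :
    ∫ x, ‖f x‖ ^ p ∂μ ≤ c.toReal ^ p * ∫ x, ‖g x‖ ^ p ∂μ := by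
  rw [integral_norm_rpow_eq_toReal_eLpNorm_rpow hp hf,
    integral_norm_rpow_eq_toReal_eLpNorm_rpow hp hg.1]
  calc (eLpNorm f (.ofReal p) μ ^ p).toReal
      ≤ ((c * eLpNorm g (.ofReal p) μ) ^ p).toReal :=
        ENNReal.toReal_mono (by finiteness [hg.2]) (ENNReal.rpow_le_rpow h hp.le)
    _ = c.toReal ^ p * (eLpNorm g (.ofReal p) μ ^ p).toReal := by
        rw [ENNReal.mul_rpow_of_nonneg _ _ hp.le, ENNReal.toReal_mul, ENNReal.toReal_rpow]

theorem integral_rpow_le_of_ae_mul_norm_le_add {F' : Type*} [NormedAddCommGroup F'] {p C : ℝ}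
    (hp : 1 < p) (hC : 0 < C) {u : α → E} {v : α → F} {w : α → F'}
    (hu : MemLp u (.ofReal p) μ) (hv : MemLp v (.ofReal p) μ) (hw : MemLp w (.ofReal p) μ)
    (h : ∀ᵐ x ∂μ, C * ‖u x‖ ≤ ‖v x‖ + ‖w x‖) :
    C / 4 * ∫ x, ‖u x‖ ^ p ∂μ ≤ 1 / p * (2 * (p - 1) / (C * p)) ^ (p - 1) *
      (2 ^ (p - 1) * ∫ x, ‖v x‖ ^ p ∂μ + ∫ x, ‖w x‖ ^ p ∂μ) := by
  have hp0 : 0 < p := by linarith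
  have hv' := (hv.integrable_norm_rpow_ofReal hp0).const_mul (2 ^ (p - 1))
  have hw' := hw.integrable_norm_rpow_ofReal hp0
  rw [← integral_const_mul, ← integral_const_mul, ← integral_add hv' hw', ← integral_const_mul]
  refine integral_mono_ae ((hu.integrable_norm_rpow_ofReal hp0).const_mul _)
    ((hv'.add hw').const_mul _) (h.mono fun x hx => ?_)
  exact Real.mul_rpow_le_of_mul_le_add hp hC (norm_nonneg _) (norm_nonneg _) (norm_nonneg _) hx

end Lp

section Convolution

variable {G : Type*} [AddCommGroup G] [MeasurableSpace G] {μ : Measure G}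
  {𝕜 E E' F : Type*} [NontriviallyNormedField 𝕜]
  [NormedAddCommGroup E] [NormedAddCommGroup E'] [NormedAddCommGroup F]
  [NormedSpace 𝕜 E] [NormedSpace 𝕜 E'] [NormedSpace 𝕜 F] [NormedSpace ℝ F]
  (L : E →L[𝕜] E' →L[𝕜] F)

theorem enorm_convolution_le_lintegral (f : G → E) (g : G → E') (x : G) :
    ‖(f ⋆[L, μ] g) x‖ₑ ≤ ‖L‖ₑ * ∫⁻ y, ‖f y‖ₑ * ‖g (x - y)‖ₑ ∂μ := by
  rw [convolution_def, ← lintegral_const_mul' _ _ enorm_ne_top]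
  refine (enorm_integral_le_lintegral_enorm _).trans (lintegral_mono fun y => ?_)
  rw [← mul_assoc]
  exact L.le_opENorm₂ _ _

variable [MeasurableAdd₂ G] [MeasurableNeg G] [SFinite μ] [μ.IsAddLeftInvariant]

theorem MeasureTheory.AEStronglyMeasurable.convolution {f : G → E} {g : G → E'}
    (hf : AEStronglyMeasurable f μ) (hg : AEStronglyMeasurable g μ) :
    AEStronglyMeasurable (f ⋆[L, μ] g) μ :=
  (hf.convolution_integrand L hg).integral_prod_right'

theorem aemeasurable_mul_comp_sub {u v : G → ℝ≥0∞} (hu : AEMeasurable u μ)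
    (hv : AEMeasurable v μ) :
    AEMeasurable (fun z : G × G => u z.2 * v (z.1 - z.2)) (μ.prod μ) :=
  hu.comp_snd.mul
    (hv.comp_quasiMeasurePreserving (quasiMeasurePreserving_sub_of_right_invariant μ μ))

theorem lintegral_lintegral_mul_comp_sub {u v : G → ℝ≥0∞} (hu : AEMeasurable u μ)
    (hv : AEMeasurable v μ) :
    ∫⁻ x, ∫⁻ y, u y * v (x - y) ∂μ ∂μ = (∫⁻ y, u y ∂μ) * ∫⁻ z, v z ∂μ := by
  rw [lintegral_lintegral_swap (aemeasurable_mul_comp_sub hu hv), ← lintegral_mul_const'' _ hu]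
  refine lintegral_congr fun y => ?_
  have hvy : AEMeasurable (fun x => v (x - y)) μ :=
    hv.comp_quasiMeasurePreserving (measurePreserving_sub_right μ y).quasiMeasurePreserving
  rw [lintegral_const_mul'' _ hvy, lintegral_sub_right_eq_self v y]

variable [μ.IsNegInvariant]

theorem enorm_convolution_le_eLpNorm_top {f : G → E} {g : G → E'} (hg : AEStronglyMeasurable g μ)
    (x : G) : ‖(f ⋆[L, μ] g) x‖ₑ ≤ ‖L‖ₑ * eLpNorm f ∞ μ * eLpNorm g 1 μ := by
  have hgx : AEMeasurable (fun y => ‖g (x - y)‖ₑ) μ :=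
    hg.enorm.comp_quasiMeasurePreserving (quasiMeasurePreserving_sub_left_of_right_invariant μ x)
  calc ‖(f ⋆[L, μ] g) x‖ₑ ≤ ‖L‖ₑ * ∫⁻ y, ‖f y‖ₑ * ‖g (x - y)‖ₑ ∂μ :=
        enorm_convolution_le_lintegral L f g x
    _ ≤ ‖L‖ₑ * ∫⁻ y, eLpNorm f ∞ μ * ‖g (x - y)‖ₑ ∂μ := by
        gcongr ‖L‖ₑ * ?_
        refine lintegral_mono_ae ((enorm_ae_le_eLpNormEssSup f μ).mono fun y hy => ?_)
        rw [eLpNorm_exponent_top]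
        gcongr
    _ = ‖L‖ₑ * eLpNorm f ∞ μ * eLpNorm g 1 μ := by
        rw [lintegral_const_mul'' _ hgx, lintegral_sub_left_eq_self (‖g ·‖ₑ) x,
          eLpNorm_one_eq_lintegral_enorm, mul_assoc]

theorem enorm_convolution_rpow_le {p : ℝ} (hp : 1 < p) {f : G → E} {g : G → E'}
    (hf : AEStronglyMeasurable f μ) (hg : AEStronglyMeasurable g μ) (x : G) :
    ‖(f ⋆[L, μ] g) x‖ₑ ^ p
      ≤ ‖L‖ₑ ^ p * (∫⁻ y, ‖f y‖ₑ ^ p * ‖g (x - y)‖ₑ ∂μ) * (∫⁻ z, ‖g z‖ₑ ∂μ) ^ (p - 1) := by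
  have hgx : AEMeasurable (fun y => ‖g (x - y)‖ₑ) μ :=
    hg.enorm.comp_quasiMeasurePreserving (quasiMeasurePreserving_sub_left_of_right_invariant μ x)
  calc ‖(f ⋆[L, μ] g) x‖ₑ ^ p
      ≤ ‖L‖ₑ ^ p * (∫⁻ y, ‖f y‖ₑ * ‖g (x - y)‖ₑ ∂μ) ^ p := by
        rw [← ENNReal.mul_rpow_of_nonneg _ _ (by linarith)]
        exact ENNReal.rpow_le_rpow (enorm_convolution_le_lintegral L f g x) (by linarith)
    _ ≤ _ := by
        rw [mul_assoc, ← lintegral_sub_left_eq_self (fun z => ‖g z‖ₑ) x]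
        gcongr
        exact ENNReal.lintegral_mul_rpow_le hp hf.enorm hgx

theorem eLpNorm_convolution_le {p : ℝ} (hp : 1 < p) {f : G → E} {g : G → E'}
    (hf : AEStronglyMeasurable f μ) (hg : AEStronglyMeasurable g μ) :
    eLpNorm (f ⋆[L, μ] g) (.ofReal p) μ ≤ ‖L‖ₑ * eLpNorm f (.ofReal p) μ * eLpNorm g 1 μ := by
  have hp0 : 0 < p := by linarith
  have hfp : AEMeasurable (fun y => ‖f y‖ₑ ^ p) μ := hf.enorm.pow_const p
  have hinner := (aemeasurable_mul_comp_sub hfp hg.enorm).lintegral_prod_right'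
  rw [← ENNReal.rpow_le_rpow_iff hp0, ENNReal.mul_rpow_of_nonneg _ _ hp0.le,
    ENNReal.mul_rpow_of_nonneg _ _ hp0.le, eLpNorm_ofReal_rpow hp0, eLpNorm_ofReal_rpow hp0,
    eLpNorm_one_eq_lintegral_enorm]
  calc ∫⁻ x, ‖(f ⋆[L, μ] g) x‖ₑ ^ p ∂μ
      ≤ ∫⁻ x, ‖L‖ₑ ^ p * (∫⁻ y, ‖f y‖ₑ ^ p * ‖g (x - y)‖ₑ ∂μ)
          * (∫⁻ z, ‖g z‖ₑ ∂μ) ^ (p - 1) ∂μ :=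
        lintegral_mono fun x => enorm_convolution_rpow_le L hp hf hg x
    _ = ‖L‖ₑ ^ p * (∫⁻ y, ‖f y‖ₑ ^ p ∂μ) * (∫⁻ z, ‖g z‖ₑ ∂μ) ^ p := by
        rw [lintegral_mul_const'' _ (hinner.const_mul _), lintegral_const_mul' _ _ (by finiteness),
          lintegral_lintegral_mul_comp_sub hfp hg.enorm, mul_assoc, mul_assoc,
          ENNReal.self_mul_rpow_sub_one hp.le, mul_assoc]

end Convolution

section SetConvolution

variable {G E : Type*} [AddCommGroup G] [MeasurableSpace G] {μ : Measure G}
  [NormedAddCommGroup E] [NormedSpace ℝ E] {s : Set G}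

theorem convolution_indicator_lsmul_apply (hs : MeasurableSet s) (f : G → ℝ) (g : G → E)
    (x : G) : (s.indicator f ⋆[lsmul ℝ ℝ, μ] g) x = ∫ y in s, f y • g (x - y) ∂μ := by
  rw [convolution_def, ← integral_indicator hs]
  congr 1 with y
  by_cases hy : y ∈ s <;> simp [hy]

variable [MeasurableAdd₂ G] [MeasurableNeg G] [SFinite μ] [μ.IsAddLeftInvariant]
  [μ.IsNegInvariant]

theorem eLpNorm_convolution_indicator_one_top_le {g : G → E} (hg : AEStronglyMeasurable g μ)
    (ν : Measure G) : eLpNorm (s.indicator 1 ⋆[lsmul ℝ ℝ, μ] g) ∞ ν ≤ eLpNorm g 1 μ := by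
  have h1 : eLpNorm (s.indicator (1 : G → ℝ)) ∞ μ ≤ 1 := by
    rw [eLpNorm_exponent_top]
    refine eLpNormEssSup_le_of_ae_enorm_bound (ae_of_all _ fun x => ?_)
    by_cases hx : x ∈ s <;> simp [hx]
  rw [eLpNorm_exponent_top]
  refine eLpNormEssSup_le_of_ae_enorm_bound (ae_of_all _ fun x => ?_)
  grw [enorm_convolution_le_eLpNorm_top _ hg x, opENorm_lsmul_le, h1, one_mul, one_mul]

theorem eLpNorm_smul_convolution_sub_convolution_le (hs : MeasurableSet s) {p : ℝ} (hp : 1 < p)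
    {f : G → ℝ} {g : G → E} (hf : AEStronglyMeasurable f (μ.restrict s))
    (hg : AEStronglyMeasurable g μ) :
    eLpNorm (f • (s.indicator 1 ⋆[lsmul ℝ ℝ, μ] g) - s.indicator f ⋆[lsmul ℝ ℝ, μ] g)
        (.ofReal p) (μ.restrict s)
      ≤ (eLpNorm (s.indicator 1 ⋆[lsmul ℝ ℝ, μ] g) ∞ (μ.restrict s) + eLpNorm g 1 μ)
        * eLpNorm f (.ofReal p) (μ.restrict s) := by
  have hf' : AEStronglyMeasurable (s.indicator f) μ := (aestronglyMeasurable_indicator_iff hs).2 hf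
  have h1 : AEStronglyMeasurable (s.indicator (1 : G → ℝ)) μ :=
    aestronglyMeasurable_const.indicator hs
  calc _ ≤ eLpNorm (f • (s.indicator 1 ⋆[lsmul ℝ ℝ, μ] g)) (.ofReal p) (μ.restrict s)
        + eLpNorm (s.indicator f ⋆[lsmul ℝ ℝ, μ] g) (.ofReal p) (μ.restrict s) :=
        eLpNorm_sub_le (hf.smul (h1.convolution _ hg).restrict) (hf'.convolution _ hg).restrict
          (by simpa using hp.le)
    _ ≤ eLpNorm f (.ofReal p) (μ.restrict s)
          * eLpNorm (s.indicator 1 ⋆[lsmul ℝ ℝ, μ] g) ∞ (μ.restrict s)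
        + ‖lsmul ℝ ℝ‖ₑ * eLpNorm (s.indicator f) (.ofReal p) μ * eLpNorm g 1 μ :=
        add_le_add (eLpNorm_smul_le_eLpNorm_mul_eLpNorm_top _ _ hf)
          ((eLpNorm_mono_measure _ Measure.restrict_le_self).trans
            (eLpNorm_convolution_le _ hp hf' hg))
    _ ≤ _ := by
        rw [eLpNorm_indicator_eq_eLpNorm_restrict hs, add_mul, mul_comm]
        grw [opENorm_lsmul_le, one_mul, mul_comm (eLpNorm f _ _)]

theorem MeasureTheory.MemLp.smul_convolution_sub_convolution (hs : MeasurableSet s) {p : ℝ}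
    (hp : 1 < p) {f : G → ℝ} {g : G → E} (hf : MemLp f (.ofReal p) (μ.restrict s))
    (hg : Integrable g μ) :
    MemLp (f • (s.indicator 1 ⋆[lsmul ℝ ℝ, μ] g) - s.indicator f ⋆[lsmul ℝ ℝ, μ] g)
      (.ofReal p) (μ.restrict s) := by
  have hf' : AEStronglyMeasurable (s.indicator f) μ :=
    (aestronglyMeasurable_indicator_iff hs).2 hf.1
  have h1 : AEStronglyMeasurable (s.indicator (1 : G → ℝ)) μ :=
    aestronglyMeasurable_const.indicator hs
  have hg1 : eLpNorm g 1 μ < ∞ := (memLp_one_iff_integrable.2 hg).2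
  have h1top :=
    (eLpNorm_convolution_indicator_one_top_le (s := s) hg.1 (μ.restrict s)).trans_lt hg1
  refine ⟨(hf.1.smul (h1.convolution _ hg.1).restrict).sub (hf'.convolution _ hg.1).restrict,
    (eLpNorm_smul_convolution_sub_convolution_le hs hp hf.1 hg.1).trans_lt ?_⟩
  exact ENNReal.mul_lt_top (ENNReal.add_lt_top.2 ⟨h1top, hg1⟩) hf.2

end SetConvolution

theorem Lp_gradient_estimate_general
    {n : ℕ} (Ω : Set (EuclideanSpace ℝ (Fin n)))
    (hΩopen : IsOpen Ω)
    (p : ℝ) (hp : 2 ≤ p) (C₀ : ℝ) (hC₀ : 0 < C₀)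
    (J : EuclideanSpace ℝ (Fin n) → ℝ)
    (Jgrad : EuclideanSpace ℝ (Fin n) → EuclideanSpace ℝ (Fin n))
    (hJgradInt : Integrable Jgrad)
    (F'' : ℝ → ℝ)
    (hcoer : ∀ᵐ x ∂(volume.restrict Ω),
      ∀ s ∈ Set.Ioo (-1 : ℝ) 1, C₀ ≤ (∫ y in Ω, J (x - y)) + F'' s)
    (φ : EuclideanSpace ℝ (Fin n) → ℝ)
    (dφ dμ : EuclideanSpace ℝ (Fin n) → EuclideanSpace ℝ (Fin n))
    (hφ : MemLp φ (ENNReal.ofReal p) (volume.restrict Ω))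
    (hφran : ∀ᵐ x ∂(volume.restrict Ω), φ x ∈ Set.Ioo (-1 : ℝ) 1)
    (hdφ : MemLp dφ (ENNReal.ofReal p) (volume.restrict Ω))
    (hdμ : MemLp dμ (ENNReal.ofReal p) (volume.restrict Ω))
    (hident : ∀ᵐ x ∂(volume.restrict Ω),
      dμ x = ((∫ y in Ω, J (x - y)) + F'' (φ x)) • dφ x
        + φ x • (∫ y in Ω, Jgrad (x - y))
        - (∫ y in Ω, φ y • Jgrad (x - y))) :
    (C₀ / 4) * (∫ x in Ω, ‖dφ x‖ ^ p)
      ≤ (1 / p) * (2 * (p - 1) / (C₀ * p)) ^ (p - 1) *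
          (2 ^ (p - 1) * (∫ x in Ω, ‖dμ x‖ ^ p)
            + ((eLpNormEssSup (fun x => ∫ y in Ω, Jgrad (x - y))
                  (volume.restrict Ω)).toReal
                + ∫ x, ‖Jgrad x‖) ^ p * (∫ x in Ω, |φ x| ^ p)) := by
  have hp1 : 1 < p := by linarith
  have hΩ := hΩopen.measurableSet
  have hJ1 : eLpNorm Jgrad 1 volume < ∞ := (memLp_one_iff_integrable.2 hJgradInt).2
  have hw_le := eLpNorm_smul_convolution_sub_convolution_le hΩ hp1 hφ.1 hJgradInt.1
  have hw := hφ.smul_convolution_sub_convolution hΩ hp1 hJgradInt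
  have hgradA_top := (eLpNorm_convolution_indicator_one_top_le (s := Ω) hJgradInt.1
    (volume.restrict Ω)).trans_lt hJ1
  -- `∇a = 1_Ω ⋆ ∇J` and `∇J ∗ φ = 1_Ω φ ⋆ ∇J`, so `w = φ ∇a - ∇J ∗ φ`.
  set gradA := Ω.indicator 1 ⋆[lsmul ℝ ℝ] Jgrad
  set w := φ • gradA - Ω.indicator φ ⋆[lsmul ℝ ℝ] Jgrad
  have hgradA (x) : ∫ y in Ω, Jgrad (x - y) = gradA x := by
    simp [gradA, convolution_indicator_lsmul_apply hΩ]
  simp only [hgradA, ← convolution_indicator_lsmul_apply hΩ] at hident ⊢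
  have hpt : ∀ᵐ x ∂(volume.restrict Ω), C₀ * ‖dφ x‖ ≤ ‖dμ x‖ + ‖w x‖ := by
    filter_upwards [hident, hφran, hcoer] with x hx hφx hcx
    refine mul_norm_le_norm_add_norm_of_eq_smul_add hC₀.le (hcx _ hφx) ?_
    rw [hx, add_sub_assoc]
    rfl
  have hc : (eLpNorm gradA ∞ (volume.restrict Ω) + eLpNorm Jgrad 1).toReal
      = (eLpNormEssSup gradA (volume.restrict Ω)).toReal + ∫ x, ‖Jgrad x‖ := by
    rw [ENNReal.toReal_add hgradA_top.ne hJ1.ne, eLpNorm_exponent_top,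
      integral_norm_eq_lintegral_enorm hJgradInt.1, eLpNorm_one_eq_lintegral_enorm]
  calc C₀ / 4 * ∫ x in Ω, ‖dφ x‖ ^ p
      ≤ 1 / p * (2 * (p - 1) / (C₀ * p)) ^ (p - 1) *
          (2 ^ (p - 1) * (∫ x in Ω, ‖dμ x‖ ^ p) + ∫ x in Ω, ‖w x‖ ^ p) :=
        integral_rpow_le_of_ae_mul_norm_le_add hp1 hC₀ hdφ hdμ hw hpt
    _ ≤ _ := by
        rw [← hc]
        gcongr
        simpa only [Real.norm_eq_abs] using integral_norm_rpow_le_of_eLpNorm_le (by linarith)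
          (ENNReal.add_lt_top.2 ⟨hgradA_top, hJ1⟩).ne hw.1 hφ hw_le

/-- **Lᵖ gradient estimate (Step 3 of the regularity Theorem 4.2,
inequalities (s5)–(s7)).**  Let `Ω ⊂ ℝⁿ` be bounded and open, `p ≥ 2`,
`C₀ > 0`, `J ∈ W^{1,1}(ℝⁿ)` (with gradient `∇J ∈ L¹(ℝⁿ;ℝⁿ)`), and `F` twice
continuously differentiable on `(-1,1)` with `a(x) + F''(s) ≥ C₀` for all
`s ∈ (-1,1)` and a.e. `x ∈ Ω`, where `a(x) = ∫_Ω J(x-y) dy`.  Let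
`φ ∈ Lᵖ(Ω)` with `φ(x) ∈ (-1,1)` a.e., and let `dφ, dμ ∈ Lᵖ(Ω;ℝⁿ)` satisfy
`dμ(x) = (a(x) + F''(φ(x))) dφ(x) + φ(x) ∇a(x) - (∇J∗φ)(x)` a.e. in `Ω`,
where `∇a(x) = ∫_Ω ∇J(x-y) dy` and `(∇J∗φ)(x) = ∫_Ω φ(y) ∇J(x-y) dy`.  Then
`(C₀/4)‖dφ‖_{Lᵖ}ᵖ ≤ (1/p)(2(p-1)/(C₀p))^{p-1} [2^{p-1}‖dμ‖_{Lᵖ}ᵖ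
  + (‖∇a‖_{L∞} + ‖∇J‖_{L¹})ᵖ ‖φ‖_{Lᵖ}ᵖ]`. -/
theorem Lp_gradient_estimate
    {n : ℕ} (Ω : Set (EuclideanSpace ℝ (Fin n)))
    (hΩopen : IsOpen Ω) (hΩbdd : Bornology.IsBounded Ω)
    (p : ℝ) (hp : 2 ≤ p) (C₀ : ℝ) (hC₀ : 0 < C₀)
    (J : EuclideanSpace ℝ (Fin n) → ℝ)
    (Jgrad : EuclideanSpace ℝ (Fin n) → EuclideanSpace ℝ (Fin n))
    (hJint : Integrable J) (hJgradInt : Integrable Jgrad)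
    (hJsymm : ∀ᵐ x ∂(volume : Measure (EuclideanSpace ℝ (Fin n))), J x = J (-x))
    (F F' F'' : ℝ → ℝ)
    (hF' : ∀ s ∈ Set.Ioo (-1 : ℝ) 1, HasDerivAt F (F' s) s)
    (hF'' : ∀ s ∈ Set.Ioo (-1 : ℝ) 1, HasDerivAt F' (F'' s) s)
    (hF''cont : ContinuousOn F'' (Set.Ioo (-1 : ℝ) 1))
    (hcoer : ∀ᵐ x ∂(volume.restrict Ω),
      ∀ s ∈ Set.Ioo (-1 : ℝ) 1, C₀ ≤ (∫ y in Ω, J (x - y)) + F'' s)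
    (φ : EuclideanSpace ℝ (Fin n) → ℝ)
    (dφ dμ : EuclideanSpace ℝ (Fin n) → EuclideanSpace ℝ (Fin n))
    (hφ : MemLp φ (ENNReal.ofReal p) (volume.restrict Ω))
    (hφran : ∀ᵐ x ∂(volume.restrict Ω), φ x ∈ Set.Ioo (-1 : ℝ) 1)
    (hdφ : MemLp dφ (ENNReal.ofReal p) (volume.restrict Ω))
    (hdμ : MemLp dμ (ENNReal.ofReal p) (volume.restrict Ω))
    (hident : ∀ᵐ x ∂(volume.restrict Ω),
      dμ x = ((∫ y in Ω, J (x - y)) + F'' (φ x)) • dφ x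
        + φ x • (∫ y in Ω, Jgrad (x - y))
        - (∫ y in Ω, φ y • Jgrad (x - y))) :
    (C₀ / 4) * (∫ x in Ω, ‖dφ x‖ ^ p)
      ≤ (1 / p) * (2 * (p - 1) / (C₀ * p)) ^ (p - 1) *
          (2 ^ (p - 1) * (∫ x in Ω, ‖dμ x‖ ^ p)
            + ((eLpNormEssSup (fun x => ∫ y in Ω, Jgrad (x - y))
                  (volume.restrict Ω)).toReal
                + ∫ x, ‖Jgrad x‖) ^ p * (∫ x in Ω, |φ x| ^ p)) :=
  Lp_gradient_estimate_general Ω hΩopen p hp C₀ hC₀ J Jgrad hJgradInt F'' hcoer φ dφ dμ hφ hφran hdφ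
    hdμ hident
end
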